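/- For every integer m ≥ 2, the set {n ∈ ℤ : n ≥ 2m and J̃(n,m) is not maximal as an m-distance set in H(n,m)} is nonempty and its maximum equals (2·⌊2(m+1)/3⌋ − 1)². -/

import Mathlib

noncomputable section

/-- The set of distances between distinct points of `S`. -/
def distSet {n : ℕ} (S : Set (EuclideanSpace ℝ (Fin n))) : Set ℝ :=
  {d | ∃ x ∈ S, ∃ y ∈ S, x ≠ y ∧ d = dist x y}

/-- `S` is an `s`-distance set: exactly `s` distances occur between distinct points. -/
def IsSDistanceSet {n : ℕ} (s : ℕ) (S : Set (EuclideanSpace ℝ (Fin n))) : Prop :=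
  (distSet S).Finite ∧ (distSet S).ncard = s

/-- The representation `J̃(n,m)` of the Johnson graph `J(n,m)`: vectors with exactly `m`
coordinates equal to `1` and the rest equal to `0`. -/
def JohnsonRep (n m : ℕ) : Set (EuclideanSpace ℝ (Fin n)) :=
  {x | (∀ i, x i = 0 ∨ x i = 1) ∧ {i : Fin n | x i = 1}.ncard = m}

/-- The hyperplane `H(n,m) = {x : ∑ x_i = m}`. -/
def Hyp (n m : ℕ) : Set (EuclideanSpace ℝ (Fin n)) :=
  {x | ∑ i, x i = (m : ℝ)}

/-- `J̃(n,m)` is maximal as an `m`-distance set in the hyperplane `H(n,m)`. -/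
def JohnsonRepMaximal (n m : ℕ) : Prop :=
  ¬∃ y ∈ Hyp n m \ JohnsonRep n m, IsSDistanceSet m (JohnsonRep n m ∪ {y})

/-!
For `n ≥ 2m`, a point `y ∉ J̃(n,m)` can be added iff `‖y - 1_A‖² = 2k` with `1 ≤ k ≤ m` for
every `m`-set `A`. Comparing `m`-sets that differ in one element shows that all `y i - y j` are
integers, so `y = a • 1 + e` with `e` integral, and after shifting by a median level fewer than
`m` entries of `e` are positive and fewer than `m` are negative. The condition on the `m`-set
carrying all positive (resp. all negative) entries of `e` gives `n * J = h ^ 2` with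
`h = m - ∑ e`, where `1 ≤ h ≤ 2m - 1`, `3h ≤ 4m + J` and `h ≡ J (mod 2)`; hence
`n = h² / J ≤ L²` for `L = 2⌊2(m+1)/3⌋ - 1`, the largest odd integer with `3L ≤ 4m + 1`.
Conversely, for `n = L²` the point `y = L⁻¹ • 1 - 1_D` with `|D| = L - m` has
`‖y - 1_A‖² = L - 1 + 2|A ∩ D|`.
-/

open Finset

variable {n m : ℕ}

def johnsonVec (A : Finset (Fin n)) : EuclideanSpace ℝ (Fin n) :=
  WithLp.toLp 2 fun i => if i ∈ A then 1 else 0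

@[simp]
lemma johnsonVec_apply (A : Finset (Fin n)) (i : Fin n) :
    johnsonVec A i = if i ∈ A then 1 else 0 := rfl

lemma mem_johnsonRep_iff {x : EuclideanSpace ℝ (Fin n)} :
    x ∈ JohnsonRep n m ↔ ∃ A : Finset (Fin n), #A = m ∧ johnsonVec A = x := by
  constructor
  · rintro ⟨h01, hcard⟩
    refine ⟨({i | x i = 1} : Finset (Fin n)), ?_, ?_⟩
    · rw [← hcard, ← Set.ncard_coe_finset, coe_filter]
      simp
    ext i
    rcases h01 i with h | h <;> simp [h]
  · rintro ⟨A, rfl, rfl⟩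
    refine ⟨fun i => by by_cases h : i ∈ A <;> simp [h], ?_⟩
    convert Set.ncard_coe_finset A
    ext i
    by_cases h : i ∈ A <;> simp [h]

lemma dist_johnsonVec_sq (y : EuclideanSpace ℝ (Fin n)) (A : Finset (Fin n)) :
    dist y (johnsonVec A) ^ 2 = ∑ i, y i ^ 2 + #A - 2 * ∑ i ∈ A, y i := by
  have hterm : ∀ i, dist (y i) (johnsonVec A i) ^ 2 =
      y i ^ 2 + if i ∈ A then 1 - 2 * y i else 0 := by
    intro i
    rw [Real.dist_eq, sq_abs]
    by_cases h : i ∈ A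
    · simp only [johnsonVec_apply, h, if_true]
      ring
    · simp [h]
  rw [EuclideanSpace.dist_eq, Real.sq_sqrt (by positivity), sum_congr rfl fun i _ => hterm i,
    sum_add_distrib, sum_ite_mem, univ_inter, sum_sub_distrib, mul_sum]
  simp only [sum_const, nsmul_eq_mul, mul_one]
  ring

lemma dist_johnsonVec_johnsonVec_sq {A B : Finset (Fin n)} (hA : #A = m) (hB : #B = m) :
    dist (johnsonVec A) (johnsonVec B) ^ 2 = 2 * (m - #(A ∩ B) : ℝ) := by
  rw [dist_johnsonVec_sq]
  simp only [johnsonVec_apply, apply_ite (· ^ 2 : ℝ → ℝ), one_pow, ne_eq, OfNat.ofNat_ne_zero,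
    not_false_eq_true, zero_pow, sum_ite_mem, inter_comm, inter_univ, sum_const, hA, hB,
    nsmul_eq_mul, mul_one]
  ring

def johnsonDists (m : ℕ) : Set ℝ := (fun k : ℕ => √(2 * k)) '' Set.Icc 1 m

lemma ncard_johnsonDists : (johnsonDists m).ncard = m := by
  rw [johnsonDists, Set.ncard_image_of_injective _ fun a b hab => by simpa using hab]
  simp

lemma mem_johnsonDists_iff {d : ℝ} (hd : 0 ≤ d) :
    d ∈ johnsonDists m ↔ ∃ k ∈ Set.Icc 1 m, d ^ 2 = 2 * k := by
  refine exists_congr fun k => and_congr_right fun _ => ?_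
  rw [Real.sqrt_eq_iff_eq_sq (by positivity) hd, eq_comm]

lemma distSet_johnsonRep (hn : 2 * m ≤ n) : distSet (JohnsonRep n m) = johnsonDists m := by
  ext d
  constructor
  · rintro ⟨x, hx, y, hy, hxy, rfl⟩
    obtain ⟨A, hA, rfl⟩ := mem_johnsonRep_iff.1 hx
    obtain ⟨B, hB, rfl⟩ := mem_johnsonRep_iff.1 hy
    have hAB : #(A ∩ B) < m := by
      refine hA ▸ card_lt_card (ssubset_of_subset_of_ne inter_subset_left fun h => hxy ?_)
      rw [eq_of_subset_of_card_le (inter_eq_left.1 h) (hA.trans hB.symm).ge]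
    refine ⟨m - #(A ∩ B), ⟨by omega, by omega⟩, ?_⟩
    rw [Real.sqrt_eq_iff_eq_sq (by positivity) dist_nonneg, dist_johnsonVec_johnsonVec_sq hA hB,
      Nat.cast_sub hAB.le]
  · rintro ⟨k, ⟨hk1, hkm⟩, rfl⟩
    let A : Finset (Fin n) := (range m).attachFin fun a ha => by rw [mem_range] at ha; omega
    let B : Finset (Fin n) := (Ico k (k + m)).attachFin fun a ha => by
      rw [mem_Ico] at ha; omega
    have hAB : A ∩ B = (Ico k m).attachFin fun a ha => by
        rw [mem_Ico] at ha; omega := by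
      ext i
      simp only [A, B, mem_inter, mem_attachFin, mem_range, mem_Ico]
      omega
    have hdist := dist_johnsonVec_johnsonVec_sq (m := m) (A := A) (B := B) (by simp [A])
      (by simp [B])
    rw [hAB, card_attachFin, Nat.card_Ico, Nat.cast_sub hkm] at hdist
    refine ⟨johnsonVec A, mem_johnsonRep_iff.2 ⟨A, by simp [A], rfl⟩,
      johnsonVec B, mem_johnsonRep_iff.2 ⟨B, by simp [B], rfl⟩, fun h => ?_, ?_⟩
    · rw [h, dist_self] at hdist
      have : (1 : ℝ) ≤ k := by exact_mod_cast hk1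
      linarith
    · rw [Real.sqrt_eq_iff_eq_sq (by positivity) dist_nonneg, hdist]
      ring

lemma distSet_union_singleton {S : Set (EuclideanSpace ℝ (Fin n))} {y : EuclideanSpace ℝ (Fin n)}
    (hy : y ∉ S) : distSet (S ∪ {y}) = distSet S ∪ (dist y ·) '' S := by
  ext d
  constructor
  · rintro ⟨x, hx | rfl, x', hx' | rfl, hne, rfl⟩
    · exact .inl ⟨x, hx, x', hx', hne, rfl⟩
    · exact .inr ⟨x, hx, dist_comm _ _⟩
    · exact .inr ⟨x', hx', rfl⟩
    · exact absurd rfl hne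
  · rintro (⟨x, hx, x', hx', hne, rfl⟩ | ⟨x, hx, rfl⟩)
    · exact ⟨x, .inl hx, x', .inl hx', hne, rfl⟩
    · exact ⟨y, .inr rfl, x, .inl hx, fun h => hy (h ▸ hx), rfl⟩

def HasJohnsonDistances (m : ℕ) (y : EuclideanSpace ℝ (Fin n)) : Prop :=
  ∀ A : Finset (Fin n), #A = m → ∃ k ∈ Set.Icc 1 m, dist y (johnsonVec A) ^ 2 = 2 * k

lemma isSDistanceSet_union_singleton_iff (hn : 2 * m ≤ n) {y : EuclideanSpace ℝ (Fin n)}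
    (hy : y ∉ JohnsonRep n m) :
    IsSDistanceSet m (JohnsonRep n m ∪ {y}) ↔ HasJohnsonDistances m y := by
  have hfin : (johnsonDists m).Finite := (Set.finite_Icc 1 m).image _
  have hsub : (dist y ·) '' JohnsonRep n m ⊆ johnsonDists m ↔ HasJohnsonDistances m y := by
    rw [Set.image_subset_iff]
    constructor
    · intro h A hA
      exact (mem_johnsonDists_iff dist_nonneg).1 (h (mem_johnsonRep_iff.2 ⟨A, hA, rfl⟩))
    · intro h x hx
      obtain ⟨A, hA, rfl⟩ := mem_johnsonRep_iff.1 hx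
      exact (mem_johnsonDists_iff dist_nonneg).2 (h A hA)
  rw [IsSDistanceSet, distSet_union_singleton hy, distSet_johnsonRep hn, ← hsub,
    ← Set.union_eq_left]
  constructor
  · rintro ⟨hfin', hcard⟩
    exact (Set.eq_of_subset_of_ncard_le Set.subset_union_left
      (by rw [hcard, ncard_johnsonDists]) hfin').symm
  · intro h
    rw [h]
    exact ⟨hfin, ncard_johnsonDists⟩

lemma not_johnsonRepMaximal_iff (hn : 2 * m ≤ n) :
    ¬JohnsonRepMaximal n m ↔ ∃ y ∈ Hyp n m \ JohnsonRep n m, HasJohnsonDistances m y := by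
  rw [JohnsonRepMaximal, not_not]
  exact exists_congr fun y => and_congr_right fun hy => isSDistanceSet_union_singleton_iff hn hy.2

section IntegerVectors

variable {ι : Type*} [Fintype ι]

lemma exists_balanced_level (z : ι → ℤ) (hm : 1 ≤ m) (hι : m ≤ Fintype.card ι)
    (hwidth : ∀ A B : Finset ι, #A = m → #B = m → ∑ i ∈ A, z i < ∑ i ∈ B, z i + m) :
    ∃ t : ℤ, #{i | z i < t} < m ∧ #{i | t < z i} < m := by
  have : Nonempty ι := Fintype.card_pos_iff.1 (by omega)
  obtain ⟨i₀, hi₀⟩ := Finite.exists_min z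
  obtain ⟨i₁, hi₁⟩ := Finite.exists_max z
  obtain ⟨t, ht, hleast⟩ := Int.exists_least_of_bdd (P := fun t => m ≤ #{i | z i ≤ t})
    ⟨z i₀, fun t ht => by
      obtain ⟨i, hi⟩ := card_pos.1 (by omega : 0 < #{i | z i ≤ t})
      exact (hi₀ i).trans (mem_filter.1 hi).2⟩
    ⟨z i₁, by simpa [filter_true_of_mem fun i _ => hi₁ i] using hι⟩
  refine ⟨t, ?_, ?_⟩
  · by_contra! h
    have := hleast (t - 1) (by simpa only [Int.le_sub_one_iff] using h)
    omega
  · by_contra! h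
    obtain ⟨A, hA, hAm⟩ := exists_subset_card_eq h
    obtain ⟨B, hB, hBm⟩ := exists_subset_card_eq ht
    have hAsum : m * (t + 1) ≤ ∑ i ∈ A, z i := by
      simpa [hAm] using card_nsmul_le_sum A z (t + 1) fun i hi => (mem_filter.1 (hA hi)).2
    have hBsum : ∑ i ∈ B, z i ≤ m * t := by
      simpa [hBm] using sum_le_card_nsmul B z t fun i hi => (mem_filter.1 (hB hi)).2
    linarith [hwidth A B hAm hBm]

lemma exists_card_eq_sum_eq_sum_posPart (e : ι → ℤ) (hpos : #{i | 0 < e i} ≤ m)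
    (hnonneg : m ≤ #{i | 0 ≤ e i}) :
    ∃ S : Finset ι, #S = m ∧ ∑ i ∈ S, e i = ∑ i, (e i)⁺ := by
  obtain ⟨S, hposS, hSnonneg, hS⟩ := exists_subsuperset_card_eq
    (monotone_filter_right _ fun i _ (h : 0 < e i) => h.le) hpos hnonneg
  refine ⟨S, hS, ?_⟩
  rw [← sum_subset (subset_univ S) fun i _ hi => posPart_eq_zero.2 (not_lt.1 fun h =>
    hi (hposS (mem_filter.2 ⟨mem_univ i, h⟩)))]
  exact sum_congr rfl fun i hi => (posPart_eq_self.2 (mem_filter.1 (hSnonneg hi)).2).symm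

end IntegerVectors

lemma sq_le_mul_sq {h J : ℤ} (hm : 2 ≤ m) (hJ : 1 ≤ J) (h0 : 0 ≤ h) (hh : h ≤ 2 * m - 1)
    (h3 : 3 * h ≤ 4 * m + J) (hpar : h % 2 = J % 2) :
    h ^ 2 ≤ J * ((2 * (2 * (m + 1) / 3) - 1 : ℕ) : ℤ) ^ 2 := by
  set L : ℤ := ((2 * (2 * (m + 1) / 3) - 1 : ℕ) : ℤ)
  have hL3 : 3 ≤ L := by omega
  -- `4m - 3 ≤ 3L ≤ 4m + 1` with `L` odd, so for `J = 1` parity gives `h ≤ L`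
  rcases (by omega : J = 1 ∨ J = 2 ∨ J = 3 ∨ 4 ≤ J) with rfl | rfl | rfl | hJ4
  · nlinarith [(by omega : h ≤ L)]
  · nlinarith [(by omega : h ≤ L + 1)]
  · nlinarith [(by omega : h ≤ L + 2)]
  · nlinarith [(by omega : h ≤ 2 * L)]

lemma natCast_mul_eq_sq_of_eq_add_intCast {y : EuclideanSpace ℝ (Fin n)} {a : ℝ} {e : Fin n → ℤ}
    (hye : ∀ i, y i = a + e i) (hH : y ∈ Hyp n m) {S : Finset (Fin n)} (hS : #S = m) {k : ℕ}
    (hk : ∑ i, y i ^ 2 + m - 2 * ∑ i ∈ S, y i = 2 * k) :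
    (n : ℤ) * (∑ i, e i ^ 2 + m - 2 * ∑ i ∈ S, e i - 2 * k) = (m - ∑ i, e i) ^ 2 := by
  have hsum : n * a + ∑ i, (e i : ℝ) = m := by
    rw [← hH.out]
    simp [hye, sum_add_distrib]
  have hsq : ∑ i, y i ^ 2 = n * a ^ 2 + 2 * a * ∑ i, (e i : ℝ) + ∑ i, (e i : ℝ) ^ 2 := by
    simp [hye, add_sq, sum_add_distrib, mul_sum]
  have hsumS : ∑ i ∈ S, y i = m * a + ∑ i ∈ S, (e i : ℝ) := by
    simp [hye, sum_add_distrib, hS]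
  rw [hsq, hsumS] at hk
  have : ((n * (∑ i, e i ^ 2 + m - 2 * ∑ i ∈ S, e i - 2 * k) : ℤ) : ℝ) =
      ((m - ∑ i, e i) ^ 2 : ℤ) := by
    push_cast
    linear_combination (n : ℝ) * hk + (m - ∑ i, (e i : ℝ) - n * a) * hsum
  exact_mod_cast this

namespace HasJohnsonDistances

variable {y : EuclideanSpace ℝ (Fin n)}

lemma exists_eq (hy : HasJohnsonDistances m y) {A : Finset (Fin n)} (hA : #A = m) :
    ∃ k ∈ Set.Icc 1 m, ∑ i, y i ^ 2 + m - 2 * ∑ i ∈ A, y i = 2 * k := by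
  simpa only [dist_johnsonVec_sq, hA] using hy A hA

lemma exists_sum_sub_sum (hy : HasJohnsonDistances m y) {A B : Finset (Fin n)} (hA : #A = m)
    (hB : #B = m) : ∃ d : ℤ, |d| < m ∧ ∑ i ∈ A, y i - ∑ i ∈ B, y i = d := by
  obtain ⟨kA, ⟨hkA1, hkAm⟩, hkA⟩ := hy.exists_eq hA
  obtain ⟨kB, ⟨hkB1, hkBm⟩, hkB⟩ := hy.exists_eq hB
  refine ⟨kB - kA, abs_lt.2 ⟨by omega, by omega⟩, ?_⟩
  push_cast
  linarith

lemma exists_int_sub (hy : HasJohnsonDistances m y) (hm : 1 ≤ m) (hn : m < n) (i j : Fin n) :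
    ∃ d : ℤ, y i - y j = d := by
  have hcard : m - 1 ≤ #(univ \ {i, j}) := by
    have := le_card_sdiff {i, j} (univ : Finset (Fin n))
    have := card_le_two (a := i) (b := j)
    simp only [card_univ, Fintype.card_fin] at *
    omega
  obtain ⟨T, hT, hTcard⟩ := exists_subset_card_eq hcard
  have hiT : i ∉ T := fun h => by simpa using hT h
  have hjT : j ∉ T := fun h => by simpa using hT h
  obtain ⟨d, -, hd⟩ := hy.exists_sum_sub_sum (A := insert i T) (B := insert j T)
    (by rw [card_insert_of_notMem hiT]; omega) (by rw [card_insert_of_notMem hjT]; omega)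
  refine ⟨d, ?_⟩
  rw [← hd, sum_insert hiT, sum_insert hjT]
  ring

lemma exists_eq_add_int (hy : HasJohnsonDistances m y) (hm : 1 ≤ m) (hn : m < n) :
    ∃ (a : ℝ) (e : Fin n → ℤ), (∀ i, y i = a + e i) ∧
      #{i | e i < 0} < m ∧ #{i | 0 < e i} < m := by
  let i₀ : Fin n := ⟨0, by omega⟩
  choose z hz using fun i => hy.exists_int_sub hm hn i i₀
  have hsum (A : Finset (Fin n)) : ∑ i ∈ A, y i = #A * y i₀ + ∑ i ∈ A, (z i : ℝ) := by
    rw [← nsmul_eq_mul, ← sum_const, ← sum_add_distrib]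
    exact sum_congr rfl fun i _ => by rw [← hz]; ring
  have hwidth (A B : Finset (Fin n)) (hA : #A = m) (hB : #B = m) :
      ∑ i ∈ A, z i < ∑ i ∈ B, z i + m := by
    obtain ⟨d, hdm, hd⟩ := hy.exists_sum_sub_sum hA hB
    rw [hsum, hsum, hA, hB] at hd
    have : ∑ i ∈ A, z i - ∑ i ∈ B, z i = d := by
      have : ((∑ i ∈ A, z i - ∑ i ∈ B, z i : ℤ) : ℝ) = d := by push_cast; linarith
      exact_mod_cast this
    linarith [le_abs_self d]
  obtain ⟨t, hlt, hgt⟩ := exists_balanced_level z hm (by rw [Fintype.card_fin]; omega) hwidth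
  refine ⟨y i₀ + t, fun i => z i - t, fun i => ?_, by simpa using hlt, by simpa using hgt⟩
  push_cast
  linarith [hz i]

lemma exists_mul_eq_sq (hy : HasJohnsonDistances m y) (hH : y ∈ Hyp n m) (hm : 1 ≤ m)
    (hn : 2 * m ≤ n) : ∃ h J : ℤ, n * J = h ^ 2 ∧ 1 ≤ h ∧ h ≤ 2 * m - 1 ∧
      3 * h ≤ 4 * m + J ∧ h % 2 = J % 2 := by
  obtain ⟨a, e, hye, hneg, hpos⟩ := hy.exists_eq_add_int hm (by omega)
  have hcard (p : ℤ → Prop) [DecidablePred p] :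
      #{i | p (e i)} + #{i | ¬p (e i)} = n := by
    simpa using card_filter_add_card_filter_not (s := univ) fun i => p (e i)
  obtain ⟨Sp, hSp, hSpe⟩ := exists_card_eq_sum_eq_sum_posPart e hpos.le (by
    have := hcard (0 ≤ ·)
    simp only [not_le] at this
    omega)
  obtain ⟨Sm, hSm, hSme⟩ := exists_card_eq_sum_eq_sum_posPart (-e) (by simpa using hneg.le) (by
    have := hcard (0 < ·)
    simp only [not_lt] at this
    simpa using (by omega : m ≤ #{i | e i ≤ 0}))
  simp only [Pi.neg_apply, posPart_neg, sum_neg_distrib] at hSme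
  obtain ⟨kp, ⟨hkp1, hkpm⟩, hkp⟩ := hy.exists_eq hSp
  obtain ⟨km, ⟨hkm1, hkmm⟩, hkm⟩ := hy.exists_eq hSm
  have hJp := natCast_mul_eq_sq_of_eq_add_intCast hye hH hSp hkp
  have hJm := natCast_mul_eq_sq_of_eq_add_intCast hye hH hSm hkm
  have hJ := mul_left_cancel₀ (Nat.cast_ne_zero.2 (by omega) : (n : ℤ) ≠ 0) (hJp.trans hJm.symm)
  have hsum : ∑ i, e i = ∑ i, (e i)⁺ - ∑ i, (e i)⁻ := by
    simp only [← sum_sub_distrib, posPart_sub_negPart]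
  have hsq : ∑ i, (e i)⁺ + ∑ i, (e i)⁻ ≤ ∑ i, e i ^ 2 := by
    rw [← sum_add_distrib]
    exact sum_le_sum fun i _ => by simpa [posPart_add_negPart] using Int.natAbs_le_self_sq (e i)
  have hpar : 2 ∣ ∑ i, e i ^ 2 - ∑ i, e i := by
    rw [← sum_sub_distrib]
    exact dvd_sum fun i _ => by simpa [sq, mul_sub] using (Int.even_mul_pred_self (e i)).two_dvd
  have hp := sum_nonneg fun i (_ : i ∈ univ) => posPart_nonneg (e i)
  have hq := sum_nonneg fun i (_ : i ∈ univ) => negPart_nonneg (e i)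
  -- `hJ` says `km = kp + ∑ e⁺ + ∑ e⁻`, which together with `1 ≤ kp`, `km ≤ m` and `hsq`
  -- gives all the bounds
  refine ⟨_, _, hJp, ?_, ?_, ?_, ?_⟩ <;> omega

lemma le_sq (hy : HasJohnsonDistances m y) (hH : y ∈ Hyp n m) (hm : 2 ≤ m) (hn : 2 * m ≤ n) :
    n ≤ (2 * (2 * (m + 1) / 3) - 1) ^ 2 := by
  obtain ⟨h, J, hnJ, h1, h2, h3, hpar⟩ := hy.exists_mul_eq_sq hH (by omega) hn
  have hJ : 1 ≤ J := by
    by_contra! hJ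
    nlinarith [mul_nonpos_of_nonneg_of_nonpos (Int.natCast_nonneg n) (by omega : J ≤ 0)]
  have := sq_le_mul_sq hm hJ (by omega) h2 h3 hpar
  have : (n : ℤ) ≤ ((2 * (2 * (m + 1) / 3) - 1 : ℕ) : ℤ) ^ 2 := by nlinarith
  exact_mod_cast this

end HasJohnsonDistances

lemma not_johnsonRepMaximal_sq {h : ℕ} (hh : 3 ≤ h) (hodd : Odd h) (hmh : m ≤ h)
    (h4 : 3 * h ≤ 4 * m + 1) : ¬JohnsonRepMaximal (h ^ 2) m := by
  rw [not_johnsonRepMaximal_iff (by nlinarith)]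
  have hhn : h < h ^ 2 := by nlinarith
  obtain ⟨D, -, hD⟩ := exists_subset_card_eq (s := (univ : Finset (Fin (h ^ 2)))) (n := h - m)
    (by simp only [card_univ, Fintype.card_fin]; omega)
  obtain ⟨i₀, hi₀⟩ : ∃ i, i ∉ D := by
    by_contra! hall
    rw [eq_univ_of_forall hall, card_univ, Fintype.card_fin] at hD
    omega
  have hhR : (h : ℝ) ≠ 0 := by positivity
  have hDR : (#D : ℝ) = h - m := by rw [hD, Nat.cast_sub hmh]
  let y : EuclideanSpace ℝ (Fin (h ^ 2)) := WithLp.toLp 2 fun i => (h : ℝ)⁻¹ - johnsonVec D i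
  have hsum (A : Finset (Fin (h ^ 2))) : ∑ i ∈ A, y i = #A / h - #(A ∩ D) := by
    simp [y, sum_sub_distrib, div_eq_mul_inv]
  have hsq : ∑ i, y i ^ 2 = 1 - (2 / h - 1) * #D := by
    have hyi (i) : y i ^ 2 = (h : ℝ)⁻¹ ^ 2 - if i ∈ D then (2 / h - 1 : ℝ) else 0 := by
      by_cases hi : i ∈ D
      · simp only [y, johnsonVec_apply, hi, if_true]
        ring
      · simp [y, hi]
    simp only [hyi, sum_sub_distrib, sum_const, sum_ite_mem, univ_inter, card_univ,
      Fintype.card_fin, nsmul_eq_mul]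
    push_cast
    field_simp
  refine ⟨y, ⟨?_, ?_⟩, fun A hA => ?_⟩
  · change ∑ i, y i = m
    rw [hsum, univ_inter, hDR, card_univ, Fintype.card_fin]
    field_simp
    push_cast
    ring
  · rintro ⟨h01, -⟩
    rcases h01 i₀ with h0 | h1
    · simp only [y, johnsonVec_apply, hi₀, if_false, sub_zero, inv_eq_zero,
        Nat.cast_eq_zero] at h0
      omega
    · simp only [y, johnsonVec_apply, hi₀, if_false, sub_zero, inv_eq_one, Nat.cast_eq_one] at h1
      omega
  · have hj : #(A ∩ D) ≤ h - m := hD ▸ card_le_card inter_subset_right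
    obtain ⟨r, rfl⟩ := hodd
    refine ⟨r + #(A ∩ D), ⟨by omega, by omega⟩, ?_⟩
    rw [dist_johnsonVec_sq, hsq, hsum, hA, hDR]
    push_cast
    field_simp
    ring

theorem max_n_not_maximal (m : ℕ) (hm : 2 ≤ m) :
    {n : ℕ | 2 * m ≤ n ∧ ¬ JohnsonRepMaximal n m}.Nonempty ∧
    IsGreatest {n : ℕ | 2 * m ≤ n ∧ ¬ JohnsonRepMaximal n m}
      ((2 * (2 * (m + 1) / 3) - 1) ^ 2) := by
  have hmem : (2 * (2 * (m + 1) / 3) - 1) ^ 2 ∈ {n | 2 * m ≤ n ∧ ¬JohnsonRepMaximal n m} :=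
    ⟨by nlinarith [(by omega : m ≤ 2 * (2 * (m + 1) / 3) - 1)],
      not_johnsonRepMaximal_sq (by omega) ⟨2 * (m + 1) / 3 - 1, by omega⟩ (by omega) (by omega)⟩
  refine ⟨⟨_, hmem⟩, hmem, fun n ⟨hn, hnot⟩ => ?_⟩
  obtain ⟨y, ⟨hH, -⟩, hy⟩ := (not_johnsonRepMaximal_iff hn).1 hnot
  exact hy.le_sq hH hm hn
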